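/- arXiv:math/0606368 — 4 statements merged into one kernel-verified Lean document; each statement's English description precedes it below -/
import Mathlib

section
/- Let T/K be a cyclic extension of number fields and M/K a Galois extension of number fields with gcd([M:K],[T:K]) = 1. If a prime 𝔭 of K does not split in T/K (i.e. has a unique prime above it in T), then any prime of M above 𝔭 does not split in the compositum extension MT/M. -/
/-!
Let `𝔯` be a prime of `L ⊇ M, T` above `𝔮 ∣ 𝔭`, and let `𝔟` be the prime of `T` below `𝔯`.
Since `𝔟` is the only prime of `T` above `𝔭`, the fundamental identity gives
`e(𝔟|𝔭) f(𝔟|𝔭) = [T:K]`, while `e(𝔮|𝔭) f(𝔮|𝔭)` divides `[M:K]` because `M/K` is Galois.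
Comparing `e` and `f` along the towers `K ⊆ M ⊆ L` and `K ⊆ T ⊆ L`, coprimality forces
`[T:K] ∣ e(𝔯|𝔮) f(𝔯|𝔮)`. These products sum to `[L:M] ≤ [T:K]` over the primes above `𝔮`,
so there is only one such prime.
-/

open NumberField Module

namespace Ideal

variable {R S : Type*} [CommRing R] [IsDomain R] [CommRing S] [Algebra R S]
  [Module.Finite R S] [Module.Flat R S] (p : Ideal R) [p.IsPrime]

theorem ramificationIdx_mul_inertiaDeg_eq_finrank_of_subsingleton
    (q : Ideal S) [q.IsPrime] [q.LiesOver p] (h : (p.primesOver S).Subsingleton) :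
    q.ramificationIdx R * q.inertiaDeg R = finrank R S := by
  have := (Algebra.QuasiFinite.finite_primesOver p (S := S)).fintype
  have : Subsingleton (p.primesOver S) := h.coe_sort
  rw [← sum_ramification_inertia_eq_finrank p S, Fintype.sum_subsingleton _ ⟨q, ‹_›, ‹_›⟩]

theorem primesOver_subsingleton_of_dvd_ramificationIdx_mul_inertiaDeg {n : ℕ}
    (hn : finrank R S ≤ n)
    (hdvd : ∀ q ∈ p.primesOver S, n ∣ q.ramificationIdx R * q.inertiaDeg R) :
    (p.primesOver S).Subsingleton := by
  have := (Algebra.QuasiFinite.finite_primesOver p (S := S)).fintype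
  have hpos : ∀ q ∈ p.primesOver S, 0 < q.ramificationIdx R * q.inertiaDeg R := by
    rintro q ⟨_, _⟩
    exact Nat.mul_pos (q.ramificationIdx_pos R) (q.inertiaDeg_pos R)
  intro q hq q' hq'
  by_contra hne
  have hsum : q.ramificationIdx R * q.inertiaDeg R + q'.ramificationIdx R * q'.inertiaDeg R ≤
      finrank R S := by
    rw [← sum_ramification_inertia_eq_finrank p S]
    exact Finset.add_le_sum (f := fun r : p.primesOver S ↦ r.1.ramificationIdx R * r.1.inertiaDeg R)
      (fun _ _ ↦ Nat.zero_le _) (Finset.mem_univ ⟨q, hq⟩) (Finset.mem_univ ⟨q', hq'⟩)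
      (Subtype.coe_ne_coe.mp hne)
  have hq'_ge := Nat.le_of_dvd (hpos q' hq') (hdvd q' hq')
  have hq_pos := hpos q hq
  omega

variable (G : Type*) [Group G] [Finite G] [IsDomain S] [MulSemiringAction G S] [IsGaloisGroup G R S]

theorem ramificationIdx_mul_inertiaDeg_dvd_card (q : Ideal S) [q.IsPrime] [q.LiesOver p] :
    q.ramificationIdx R * q.inertiaDeg R ∣ Nat.card G := by
  rw [← ncard_primesOver_mul_ramificationIdxIn_mul_inertiaDegIn p S G,
    ramificationIdxIn_eq_ramificationIdx p q G, inertiaDegIn_eq_inertiaDeg p q G]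
  exact Dvd.intro_left _ rfl

section Compositum

variable {R A B C : Type*} [CommRing R] [CommRing A] [CommRing B] [CommRing C]
  [Algebra R A] [Algebra R B] [Algebra R C] [Algebra A C] [Algebra B C]
  [IsScalarTower R A C] [IsScalarTower R B C]

theorem ramificationIdx_mul_inertiaDeg_dvd_of_coprime [Module.Flat A C] [Module.Flat B C]
    (𝔮 : Ideal A) (𝔟 : Ideal B) (𝔯 : Ideal C) [𝔯.LiesOver 𝔮] [𝔯.LiesOver 𝔟]
    (h : (𝔟.ramificationIdx R * 𝔟.inertiaDeg R).Coprime (𝔮.ramificationIdx R * 𝔮.inertiaDeg R)) :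
    𝔟.ramificationIdx R * 𝔟.inertiaDeg R ∣ 𝔯.ramificationIdx A * 𝔯.inertiaDeg A := by
  have he : 𝔟.ramificationIdx R ∣ 𝔯.ramificationIdx A := by
    refine Nat.Coprime.dvd_of_dvd_mul_left (m := 𝔮.ramificationIdx R) ?_ ?_
    · exact (h.coprime_dvd_left (dvd_mul_right _ _)).coprime_dvd_right (dvd_mul_right _ _)
    · rw [← ramificationIdx_tower 𝔮 𝔯]
      exact ramificationIdx_below_dvd 𝔟 𝔯
  have hf : 𝔟.inertiaDeg R ∣ 𝔯.inertiaDeg A := by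
    refine Nat.Coprime.dvd_of_dvd_mul_left (m := 𝔮.inertiaDeg R) ?_ ?_
    · exact (h.coprime_dvd_left (dvd_mul_left _ _)).coprime_dvd_right (dvd_mul_left _ _)
    · rw [← inertiaDeg_tower 𝔮 𝔯]
      exact inertiaDeg_below_dvd 𝔟 𝔯
  exact mul_dvd_mul he hf

theorem primesOver_subsingleton_of_coprime [IsDomain R] [IsDomain A]
    [Module.Finite R A] [Module.Flat R A] [Module.Finite R B] [Module.Flat R B]
    [Module.Finite A C] [Module.Flat A C] [Module.Flat B C]
    (G : Type*) [Group G] [Finite G] [MulSemiringAction G A] [IsGaloisGroup G R A]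
    (hcop : (Nat.card G).Coprime (finrank R B)) (hdeg : finrank A C ≤ finrank R B)
    {p : Ideal R} [p.IsPrime] (hp : (p.primesOver B).Subsingleton)
    (𝔮 : Ideal A) [𝔮.IsPrime] [𝔮.LiesOver p] :
    (𝔮.primesOver C).Subsingleton := by
  refine primesOver_subsingleton_of_dvd_ramificationIdx_mul_inertiaDeg 𝔮 hdeg ?_
  rintro 𝔯 ⟨_, _⟩
  have : 𝔯.LiesOver p := LiesOver.trans 𝔯 𝔮 p
  have hB := ramificationIdx_mul_inertiaDeg_eq_finrank_of_subsingleton p (𝔯.under B) hp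
  rw [← hB]
  refine ramificationIdx_mul_inertiaDeg_dvd_of_coprime 𝔮 (𝔯.under B) 𝔯 ?_
  rw [hB]
  exact (hcop.coprime_dvd_left (ramificationIdx_mul_inertiaDeg_dvd_card p G 𝔮)).symm

end Compositum

theorem existsUnique_isMaximal_comap_eq_iff {R S : Type*} [CommRing R] [CommRing S] [Algebra R S]
    [Algebra.IsIntegral R S] [FaithfulSMul R S] (P : Ideal R) [P.IsMaximal] :
    (∃! Q : Ideal S, Q.IsMaximal ∧ Q.comap (algebraMap R S) = P) ↔
      (P.primesOver S).Subsingleton := by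
  have hmem : ∀ Q : Ideal S, Q.IsMaximal ∧ Q.comap (algebraMap R S) = P ↔ Q ∈ P.primesOver S :=
    fun Q ↦ ⟨fun ⟨hQ, hc⟩ ↦ ⟨hQ.isPrime, ⟨hc.symm⟩⟩,
      fun ⟨_, hQ⟩ ↦ ⟨.of_liesOver_isMaximal Q P, hQ.over.symm⟩⟩
  simp_rw [hmem]
  constructor
  · rintro ⟨Q, -, huniq⟩ Q₁ hQ₁ Q₂ hQ₂
    exact (huniq Q₁ hQ₁).trans (huniq Q₂ hQ₂).symm
  · intro h
    obtain ⟨Q, hQ⟩ := nonempty_primesOver P (S := S)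
    exact ⟨Q, hQ, fun Q' hQ' ↦ h hQ' hQ⟩

end Ideal

theorem NumberField.primesOver_subsingleton_of_coprime {K M T L : Type*}
    [Field K] [Field M] [Field T] [Field L]
    [NumberField K] [NumberField M] [NumberField T] [NumberField L]
    [Algebra K M] [Algebra K T] [Algebra K L] [Algebra M L] [Algebra T L]
    [IsScalarTower K M L] [IsScalarTower K T L] [IsGalois K M]
    (hcop : (finrank K M).Coprime (finrank K T)) (hdeg : finrank M L ≤ finrank K T)
    {P : Ideal (𝓞 K)} [P.IsPrime] (hP : (P.primesOver (𝓞 T)).Subsingleton)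
    (Q : Ideal (𝓞 M)) [Q.IsPrime] [Q.LiesOver P] :
    (Q.primesOver (𝓞 L)).Subsingleton := by
  refine Ideal.primesOver_subsingleton_of_coprime Gal(M/K) ?_ ?_ hP Q
  · rwa [IsGalois.card_aut_eq_finrank, ← IsFractionRing.finrank_eq (𝓞 K) K (𝓞 T) T]
  · rwa [← IsFractionRing.finrank_eq (𝓞 K) K (𝓞 T) T, ← IsFractionRing.finrank_eq (𝓞 M) M (𝓞 L) L]

theorem stmt4_general (K : Type*) [Field K] [NumberField K]
    (M T : IntermediateField K (AlgebraicClosure K))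
    [FiniteDimensional K M] [FiniteDimensional K T]
    [IsGalois K M]
    (hcop : Nat.Coprime (Module.finrank K M) (Module.finrank K T))
    (P : Ideal (𝓞 K)) (hP : P.IsMaximal)
    (hnosplit : ∃! Q : Ideal (𝓞 T),
      Q.IsMaximal ∧ Q.comap (algebraMap (𝓞 K) (𝓞 T)) = P) :
    ∀ Q : Ideal (𝓞 M), Q.IsMaximal → Q.comap (algebraMap (𝓞 K) (𝓞 M)) = P →
      ∃! Q' : Ideal (𝓞 ↥(M ⊔ T)),
        Q'.IsMaximal ∧
        Q'.comap (RingOfIntegers.mapRingHom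
          (IntermediateField.inclusion (le_sup_left : M ≤ M ⊔ T))) = Q := by
  intro Q hQ hQP
  let : Algebra M ↥(M ⊔ T) := (IntermediateField.inclusion le_sup_left).toAlgebra
  let : Algebra T ↥(M ⊔ T) := (IntermediateField.inclusion le_sup_right).toAlgebra
  have : IsScalarTower K M ↥(M ⊔ T) := .of_algebraMap_eq fun _ ↦ rfl
  have : IsScalarTower K T ↥(M ⊔ T) := .of_algebraMap_eq fun _ ↦ rfl
  have : FiniteDimensional K ↥(M ⊔ T) := IntermediateField.finiteDimensional_sup M T
  have : NumberField M := .of_module_finite K M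
  have : NumberField T := .of_module_finite K T
  have : NumberField ↥(M ⊔ T) := .of_module_finite K ↥(M ⊔ T)
  have : Q.LiesOver P := ⟨hQP.symm⟩
  have hdeg : finrank M ↥(M ⊔ T) ≤ finrank K T := by
    refine Nat.le_of_mul_le_mul_left ?_ (finrank_pos (R := K) (M := M))
    have : Module.Free M ↥(M ⊔ T) := .of_divisionRing _ _
    rw [finrank_mul_finrank K M]
    exact IntermediateField.finrank_sup_le M T
  -- with these instances, `RingOfIntegers.mapRingHom (inclusion _)` is `algebraMap` by definition
  exact (Ideal.existsUnique_isMaximal_comap_eq_iff Q).mpr <|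
    NumberField.primesOver_subsingleton_of_coprime hcop hdeg
      ((Ideal.existsUnique_isMaximal_comap_eq_iff P).mp hnosplit) Q

/-- if `T/K` is cyclic, `M/K` is Galois, `gcd([M:K],[T:K]) = 1`, and a prime
`𝔭` of `K` does not split in `T/K` (unique prime above), then every prime of `M` above `𝔭`
does not split in `MT/M` (unique prime of the compositum above it). -/
theorem stmt4 (K : Type*) [Field K] [NumberField K]
    (M T : IntermediateField K (AlgebraicClosure K))
    [FiniteDimensional K M] [FiniteDimensional K T]
    [IsGalois K T] [IsCyclic (↥T ≃ₐ[K] ↥T)] [IsGalois K M]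
    (hcop : Nat.Coprime (Module.finrank K M) (Module.finrank K T))
    (P : Ideal (𝓞 K)) (hP : P.IsMaximal)
    (hnosplit : ∃! Q : Ideal (𝓞 T),
      Q.IsMaximal ∧ Q.comap (algebraMap (𝓞 K) (𝓞 T)) = P) :
    ∀ Q : Ideal (𝓞 M), Q.IsMaximal → Q.comap (algebraMap (𝓞 K) (𝓞 M)) = P →
      ∃! Q' : Ideal (𝓞 ↥(M ⊔ T)),
        Q'.IsMaximal ∧
        Q'.comap (RingOfIntegers.mapRingHom
          (IntermediateField.inclusion (le_sup_left : M ≤ M ⊔ T))) = Q :=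
  stmt4_general K M T hcop P hP hnosplit
end

section
/- Let K be a real number field and F(T) ∈ K[T] a polynomial of degree n > 0. Suppose l₀, …, l_k (with k < n) are positive reals such that the polynomials F(T + l₀), …, F(T + l_k) are linearly independent over ℂ. Then there exists a constant C > 0 such that for every real l > C, the polynomials F(T + l₀), …, F(T + l_k), F(T + l) are linearly independent over ℂ. -/
/-! The translates `F(T + x)` trace the polynomial curve `x ↦ ∑ xᵐ • Δₘ F` in `ℂ[T]`, where
`Δₘ` is the `m`-th Hasse derivative. If this curve met the span `W` of the `k + 1 ≤ n` given
translates for infinitely many `x`, every linear form vanishing on `W` would vanish on all the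
`Δₘ F`, so the `n + 1` Hasse derivatives, linearly independent because their degrees are distinct,
would lie in `W`. Hence `F(T + x) ∈ W` only for finitely many, hence bounded, `x`. -/

open Polynomial

theorem Submodule.mem_of_infinite_setOf_sum_pow_smul_mem {𝕜 V : Type*} [Field 𝕜]
    [AddCommGroup V] [Module 𝕜 V] (W : Submodule 𝕜 V) {s : Finset ℕ} (v : ℕ → V)
    (h : {x : 𝕜 | ∑ m ∈ s, x ^ m • v m ∈ W}.Infinite) {m : ℕ} (hm : m ∈ s) : v m ∈ W := by
  rw [← Subspace.forall_mem_dualAnnihilator_apply_eq_zero_iff]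
  intro φ hφ
  have hP : ∑ j ∈ s, C (φ (v j)) * X ^ j = 0 := by
    refine eq_zero_of_infinite_isRoot _ (h.mono fun x hx => ?_)
    have hφx : φ (∑ j ∈ s, x ^ j • v j) = 0 := (mem_dualAnnihilator φ).mp hφ _ hx
    simpa [eval_finsetSum, mul_comm (φ _)] using hφx
  simpa [finsetSum_coeff, coeff_C_mul_X_pow, hm] using congrArg (coeff · m) hP

namespace Polynomial

theorem linearIndependent_of_injective_natDegree {R ι : Type*} [CommRing R] [IsDomain R]
    {p : ι → R[X]} (hp : ∀ i, p i ≠ 0) (hinj : Function.Injective fun i => (p i).natDegree) :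
    LinearIndependent R p := by
  rw [linearIndependent_iff']
  intro s g hsum i hi
  by_contra hgi
  have hdeg : ∀ j, g j ≠ 0 → (g j • p j).degree = (p j).degree := fun j hj =>
    degree_smul_of_smul_regular _ (IsSMulRegular.of_ne_zero hj)
  have hsup : (s.sup fun j => (g j • p j).degree) = ⊥ := by
    rw [← degree_sum_eq_of_disjoint, hsum, degree_zero]
    rintro j ⟨-, hj⟩ j' ⟨-, hj'⟩ hne hdeq
    simp only [Function.comp_apply, hdeg j (left_ne_zero_of_smul hj),
      hdeg j' (left_ne_zero_of_smul hj'), degree_eq_natDegree (hp j),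
      degree_eq_natDegree (hp j'), Nat.cast_inj] at hdeq
    exact hne (hinj hdeq)
  have hi_bot := (Finset.sup_eq_bot_iff _ s).mp hsup i hi
  rw [hdeg i hgi, degree_eq_bot] at hi_bot
  exact hp i hi_bot

theorem hasseDeriv_ne_zero {R : Type*} [Semiring R] [IsAddTorsionFree R] {f : R[X]} (hf : f ≠ 0)
    {m : ℕ} (hm : m ≤ f.natDegree) : hasseDeriv m f ≠ 0 := by
  intro h
  have hcoeff := congrArg (coeff · (f.natDegree - m)) h
  simp only [hasseDeriv_coeff, Nat.sub_add_cancel hm, coeff_zero, coeff_natDegree,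
    ← nsmul_eq_mul] at hcoeff
  exact leadingCoeff_ne_zero.mpr hf
    ((nsmul_eq_zero_iff_right (Nat.choose_pos hm).ne').mp hcoeff)

theorem linearIndependent_hasseDeriv {R : Type*} [CommRing R] [IsDomain R] [CharZero R]
    {f : R[X]} (hf : f ≠ 0) :
    LinearIndependent R fun m : Fin (f.natDegree + 1) => hasseDeriv m f :=
  linearIndependent_of_injective_natDegree
    (fun m => hasseDeriv_ne_zero hf (Nat.le_of_lt_succ m.isLt))
    (fun m m' h => by
      simp only [natDegree_hasseDeriv] at h
      omega)

theorem taylor_eq_sum_pow_smul_hasseDeriv {R : Type*} [CommSemiring R] (r : R) (f : R[X]) :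
    taylor r f = ∑ m ∈ Finset.range (f.natDegree + 1), r ^ m • hasseDeriv m f := by
  ext k
  have hdeg : (hasseDeriv k f).natDegree < f.natDegree + 1 :=
    (natDegree_hasseDeriv_le f k).trans_lt (Nat.lt_succ_of_le (Nat.sub_le _ _))
  simp only [taylor_coeff, finsetSum_coeff, coeff_smul, smul_eq_mul, eval_eq_sum_range' hdeg,
    hasseDeriv_coeff]
  refine Finset.sum_congr rfl fun m _ => ?_
  rw [Nat.add_comm k m, Nat.choose_symm_add]
  ring

theorem finite_setOf_taylor_mem {𝕜 : Type*} [Field 𝕜] [CharZero 𝕜] {f : 𝕜[X]}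
    (hf : f ≠ 0) (W : Submodule 𝕜 𝕜[X]) [FiniteDimensional 𝕜 W]
    (hW : Module.finrank 𝕜 W ≤ f.natDegree) :
    {r : 𝕜 | taylor r f ∈ W}.Finite := by
  rw [← Set.not_infinite]
  intro hinf
  have hmem : ∀ m : Fin (f.natDegree + 1), hasseDeriv m f ∈ W := fun m =>
    W.mem_of_infinite_setOf_sum_pow_smul_mem (fun j => hasseDeriv j f)
      (by simpa only [taylor_eq_sum_pow_smul_hasseDeriv] using hinf)
      (Finset.mem_range.mpr m.isLt)
  have hli : LinearIndependent 𝕜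
      fun m : Fin (f.natDegree + 1) => (⟨hasseDeriv m f, hmem m⟩ : W) :=
    .of_comp W.subtype (linearIndependent_hasseDeriv hf)
  have := hli.fintype_card_le_finrank
  simp only [Fintype.card_fin] at this
  omega

end Polynomial

theorem stmt10_general (K : Subfield ℝ)
    (F : Polynomial ↥K) (n : ℕ) (hn : F.natDegree = n)
    (k : ℕ) (hk : k < n) (l : Fin (k + 1) → ℝ)
    (hind : LinearIndependent ℂ fun i : Fin (k + 1) =>
      (F.map ((algebraMap ℝ ℂ).comp K.subtype)).comp (X + C ((l i : ℂ)))) :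
    ∃ C₀ : ℝ, 0 < C₀ ∧ ∀ x : ℝ, C₀ < x →
      LinearIndependent ℂ (Fin.snoc
        (fun i : Fin (k + 1) =>
          (F.map ((algebraMap ℝ ℂ).comp K.subtype)).comp (X + C ((l i : ℂ))))
        ((F.map ((algebraMap ℝ ℂ).comp K.subtype)).comp (X + C ((x : ℂ))))) := by
  set G : ℂ[X] := F.map ((algebraMap ℝ ℂ).comp K.subtype)
  have hGn : G.natDegree = n := by
    rw [natDegree_map_eq_of_injective (RingHom.injective _), hn]
  have hG : G ≠ 0 := ne_zero_of_natDegree_gt (hGn ▸ hk)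
  set W := Submodule.span ℂ (Set.range fun i : Fin (k + 1) => G.comp (X + C ((l i : ℂ))))
  have : FiniteDimensional ℂ W := .span_of_finite ℂ (Set.finite_range _)
  have hW : Module.finrank ℂ W ≤ G.natDegree :=
    (finrank_range_le_card _).trans (by simpa [hGn] using hk)
  obtain ⟨r, hr⟩ := (finite_setOf_taylor_mem hG W hW).isBounded.subset_closedBall 0
  refine ⟨|r| + 1, by positivity, fun x hx => linearIndependent_finSnoc.mpr ⟨hind, fun hxW => ?_⟩⟩
  have hxr : ‖(x : ℂ)‖ ≤ r := by simpa using hr (show taylor (x : ℂ) G ∈ W from hxW)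
  rw [Complex.norm_real, Real.norm_eq_abs] at hxr
  linarith [le_abs_self x, le_abs_self r]

/-- for a real number field `K` and `F ∈ K[T]` of degree `n > 0`, if the
shifted polynomials `F(T + l₀), …, F(T + l_k)` (with `k < n`, `lᵢ > 0`) are linearly
independent over `ℂ`, then there is `C > 0` such that for every real `l > C` the family
`F(T + l₀), …, F(T + l_k), F(T + l)` is still linearly independent over `ℂ`. -/
theorem stmt10 (K : Subfield ℝ) [NumberField ↥K]
    (F : Polynomial ↥K) (n : ℕ) (hn : F.natDegree = n) (hn0 : 0 < n)
    (k : ℕ) (hk : k < n) (l : Fin (k + 1) → ℝ) (hl : ∀ i, 0 < l i)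
    (hind : LinearIndependent ℂ fun i : Fin (k + 1) =>
      (F.map ((algebraMap ℝ ℂ).comp K.subtype)).comp (X + C ((l i : ℂ)))) :
    ∃ C₀ : ℝ, 0 < C₀ ∧ ∀ x : ℝ, C₀ < x →
      LinearIndependent ℂ (Fin.snoc
        (fun i : Fin (k + 1) =>
          (F.map ((algebraMap ℝ ℂ).comp K.subtype)).comp (X + C ((l i : ℂ))))
        ((F.map ((algebraMap ℝ ℂ).comp K.subtype)).comp (X + C ((x : ℂ))))) :=
  stmt10_general K F n hn k hk l hind
end

section
/- Let q₁, …, q_k be distinct primes and let p be a prime not among them. For each i, let a_i = 1 if q_i is odd and a_i = 2 if q_i = 2, let n_i be the multiplicative order of p modulo q_i^{a_i}, and let r_i = ord_{q_i}(p^{n_i} − 1). Let l₁, …, l_k be nonnegative integers and set m = ∏ q_i^{l_i + r_i}. Then a primitive m-th root of unity has degree n = lcm(n₁q₁^{l₁}, …, n_k q_k^{l_k}) over the finite field 𝔽_p. -/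
/-!
The degree of `μ` over `𝔽_p` is the order of `p` modulo `m`, since every irreducible factor of
the `m`-th cyclotomic polynomial over `𝔽_p` has that degree. As the `qᵢ ^ (lᵢ + rᵢ)` are pairwise
coprime, this order is the lcm of the orders of `p` modulo the `qᵢ ^ (lᵢ + rᵢ)`. For one prime
`q`, if `q ^ (l + r) ∣ p ^ s - 1` then already `q ^ a ∣ p ^ s - 1`, so `s = n v`; since
`q ^ a ∣ p ^ n - 1`, lifting the exponent gives `v_q ((p ^ n) ^ v - 1) = r + v_q v`, so the
condition is exactly `q ^ l ∣ v`.
-/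

open Polynomial
open scoped Function

theorem IsPrimitiveRoot.natDegree_minpoly_eq_orderOf {K L : Type*} [Field K] [Fintype K]
    [Field L] [Algebra K L] {μ : L} {m : ℕ} [NeZero m] (hμ : IsPrimitiveRoot μ m) :
    (minpoly K μ).natDegree = orderOf (Fintype.card K : ZMod m) := by
  obtain ⟨p, hchar⟩ := CharP.exists K
  obtain ⟨f, hp, hK⟩ := FiniteField.card K p
  have := Fact.mk hp
  have : CharP L p := (Algebra.charP_iff K L p).mp hchar
  have hpm : p.Coprime m := by
    refine (Nat.Prime.coprime_iff_not_dvd hp).mpr fun hdvd => ?_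
    have := hμ.neZero'
    exact NeZero.ne (m : L) ((CharP.cast_eq_zero_iff L p m).mpr hdvd)
  have hint : IsIntegral K μ :=
    IsIntegral.of_pow (NeZero.pos m) (hμ.pow_eq_one ▸ isIntegral_one)
  have hdvd : minpoly K μ ∣ cyclotomic m K := by
    refine minpoly.dvd K μ ?_
    simpa [aeval_def, eval₂_eq_eval_map, IsRoot.def] using hμ.isRoot_cyclotomic (NeZero.pos m)
  rw [natDegree_of_dvd_cyclotomic_of_irreducible hK hpm hdvd (minpoly.irreducible hint),
    ← orderOf_units, ZMod.coe_unitOfCoprime, hK]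

theorem ZMod.orderOf_natCast_dvd_iff (M x s : ℕ) :
    orderOf (x : ZMod M) ∣ s ↔ (M : ℤ) ∣ (x : ℤ) ^ s - 1 := by
  rw [orderOf_dvd_iff_pow_eq_one, ← ZMod.intCast_zmod_eq_zero_iff_dvd, Int.cast_sub,
    Int.cast_pow, Int.cast_natCast, Int.cast_one, sub_eq_zero]

theorem ZMod.orderOf_natCast_prod {ι : Type*} (t : Finset ι) (M : ι → ℕ)
    (hM : (t : Set ι).Pairwise (Nat.Coprime on M)) (x : ℕ) :
    orderOf (x : ZMod (∏ i ∈ t, M i)) = t.lcm fun i => orderOf (x : ZMod (M i)) := by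
  refine Nat.dvd_right_iff_eq.mp fun s => ?_
  simp only [Finset.lcm_dvd_iff, ZMod.orderOf_natCast_dvd_iff, Nat.cast_prod]
  refine ⟨fun h i hi => (Finset.dvd_prod_of_mem _ hi).trans h, fun h => ?_⟩
  exact Finset.prod_dvd_of_coprime
    (fun i hi j hj hij => Nat.isCoprime_iff_coprime.mpr (hM hi hj hij)) h

/-- Lifting the exponent. -/
theorem Int.emultiplicity_pow_sub_one {q : ℕ} (hq : q.Prime) {x : ℤ}
    (hx : (q : ℤ) ^ (if q = 2 then 2 else 1) ∣ x - 1) (v : ℕ) :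
    emultiplicity (q : ℤ) (x ^ v - 1) =
      emultiplicity (q : ℤ) (x - 1) + emultiplicity (q : ℤ) v := by
  have hqx : ¬ (q : ℤ) ∣ x := fun h => by
    have hq1 : (q : ℤ) ∣ x - 1 := (dvd_pow_self _ (by split_ifs <;> norm_num)).trans hx
    have : (q : ℤ) ∣ 1 := by simpa using dvd_sub h hq1
    exact hq.ne_one (by exact_mod_cast Int.eq_one_of_dvd_one (by positivity) this)
  rcases eq_or_ne q 2 with rfl | hq2
  · simpa using Int.two_pow_sub_pow' (y := 1) v (by simpa using hx) hqx
  · rw [if_neg hq2, pow_one] at hx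
    simpa [Int.natCast_emultiplicity] using
      Int.emultiplicity_pow_sub_pow hq (hq.odd_of_ne_two hq2) (y := 1) (by simpa using hx) hqx v

theorem Int.pow_add_padicValInt_dvd_pow_sub_one_iff {q : ℕ} (hq : q.Prime) {x : ℤ}
    (hx : (q : ℤ) ^ (if q = 2 then 2 else 1) ∣ x - 1) (hx1 : x ≠ 1) (l v : ℕ) :
    (q : ℤ) ^ (l + padicValInt q (x - 1)) ∣ x ^ v - 1 ↔ q ^ l ∣ v := by
  have hx1' : x - 1 ≠ 0 := sub_ne_zero.mpr hx1
  have hval : emultiplicity (q : ℤ) (x - 1) = padicValInt q (x - 1) := by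
    have hfin : FiniteMultiplicity (q : ℤ) (x - 1) :=
      Int.finiteMultiplicity_iff.mpr ⟨by exact_mod_cast hq.ne_one, hx1'⟩
    rw [padicValInt.of_ne_one_ne_zero hq.ne_one hx1', hfin.emultiplicity_eq_multiplicity]
  rw [← Int.natCast_dvd_natCast, Nat.cast_pow, pow_dvd_iff_le_emultiplicity,
    pow_dvd_iff_le_emultiplicity, emultiplicity_pow_sub_one hq hx, hval, Nat.cast_add, add_comm,
    ENat.add_le_add_iff_left (ENat.natCast_ne_top _)]

theorem ZMod.orderOf_natCast_prime_pow_add_padicValInt {q p a : ℕ} (hq : q.Prime) (hp : 1 < p)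
    (hpq : p.Coprime q) (ha : (if q = 2 then 2 else 1) ≤ a) (l : ℕ) :
    orderOf (p : ZMod (q ^ (l + padicValInt q ((p : ℤ) ^ orderOf (p : ZMod (q ^ a)) - 1)))) =
      orderOf (p : ZMod (q ^ a)) * q ^ l := by
  have hn : 0 < orderOf (p : ZMod (q ^ a)) := by
    have : NeZero (q ^ a) := ⟨pow_ne_zero _ hq.ne_zero⟩
    rw [← ZMod.coe_unitOfCoprime p (hpq.pow_right a), orderOf_units]
    exact orderOf_pos _
  set n := orderOf (p : ZMod (q ^ a))
  have hx1 : (p : ℤ) ^ n ≠ 1 := (one_lt_pow₀ (by exact_mod_cast hp) hn.ne').ne'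
  have hqa : (q : ℤ) ^ a ∣ (p : ℤ) ^ n - 1 := by
    exact_mod_cast (ZMod.orderOf_natCast_dvd_iff _ _ _).mp dvd_rfl
  have har : a ≤ padicValInt q ((p : ℤ) ^ n - 1) :=
    ((padicValInt_dvd_iff_of_ne_one hq.ne_one _ _).mp hqa).resolve_left (sub_ne_zero.mpr hx1)
  have hx := (pow_dvd_pow (q : ℤ) ha).trans hqa
  refine Nat.dvd_right_iff_eq.mp fun s => ?_
  rw [ZMod.orderOf_natCast_dvd_iff, Nat.cast_pow]
  constructor
  · intro h
    obtain ⟨v, rfl⟩ : n ∣ s := by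
      rw [ZMod.orderOf_natCast_dvd_iff, Nat.cast_pow]
      exact (pow_dvd_pow _ (har.trans (Nat.le_add_left _ _))).trans h
    rw [pow_mul] at h
    exact mul_dvd_mul_left n ((Int.pow_add_padicValInt_dvd_pow_sub_one_iff hq hx hx1 l v).mp h)
  · rintro ⟨w, rfl⟩
    rw [mul_assoc, pow_mul]
    exact (Int.pow_add_padicValInt_dvd_pow_sub_one_iff hq hx hx1 l _).mpr (dvd_mul_right _ _)

/-- degree of a primitive `m`-th root of unity over `𝔽_p`, where
`m = ∏ qᵢ^{lᵢ + rᵢ}`, equals `lcmᵢ (nᵢ · qᵢ^{lᵢ})`. -/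
theorem stmt12 (k : ℕ) (q : Fin k → ℕ) (hq : ∀ i, (q i).Prime)
    (hqdist : Function.Injective q)
    (p : ℕ) (hp : Fact p.Prime) (hpq : ∀ i, p ≠ q i)
    (a : Fin k → ℕ) (ha : ∀ i, a i = if q i = 2 then 2 else 1)
    (n : Fin k → ℕ) (hn : ∀ i, n i = orderOf ((p : ZMod (q i ^ a i))))
    (r : Fin k → ℕ) (hr : ∀ i, r i = padicValInt (q i) ((p : ℤ) ^ n i - 1))
    (l : Fin k → ℕ) (m : ℕ) (hm : m = ∏ i, q i ^ (l i + r i))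
    (μ : AlgebraicClosure (ZMod p)) (hμ : IsPrimitiveRoot μ m) :
    (minpoly (ZMod p) μ).natDegree = Finset.univ.lcm (fun i => n i * q i ^ l i) := by
  have hcop : ((Finset.univ : Finset (Fin k)) : Set (Fin k)).Pairwise
      (Nat.Coprime on fun i => q i ^ (l i + r i)) :=
    fun i _ j _ hij => Nat.Coprime.pow _ _
      ((Nat.coprime_primes (hq i) (hq j)).mpr (hqdist.ne hij))
  have : NeZero m := ⟨hm ▸ Finset.prod_ne_zero_iff.mpr fun i _ => pow_ne_zero _ (hq i).ne_zero⟩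
  rw [hμ.natDegree_minpoly_eq_orderOf, ZMod.card, hm, ZMod.orderOf_natCast_prod _ _ hcop]
  refine Finset.lcm_congr rfl fun i _ => ?_
  rw [hr i, hn i]
  exact ZMod.orderOf_natCast_prime_pow_add_padicValInt (hq i) hp.out.one_lt
    ((Nat.coprime_primes hp.out (hq i)).mpr (hpq i)) (ha i).ge (l i)
end

section
/- Let E/F be an extension of number fields and define A = {x ∈ O_E : N_{E/F}(x) = 1}, the group of integral units of relative norm 1. Then A is a subgroup of the unit group O_E^× and its rank equals rank(O_E^×) − rank(O_F^×). -/
/-!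
The relative norm `N : O_E^× → O_F^×` has kernel `A`. Its image contains `u ^ [E : F] = N u` for
every `u ∈ O_F^×`, so it has finite index and hence full rank `rank O_F^×`; rank–nullity for the
finitely generated abelian group `O_E^×` then gives `rank A = rank O_E^× − rank O_F^×`.
-/

open NumberField Module

universe u

theorem Submodule.finrank_eq_of_smul_mem {R M : Type*} [CommRing R] [IsDomain R]
    [AddCommGroup M] [Module R M] [Module.Finite R M] (N : Submodule R M) {a : R} (ha : a ≠ 0)
    (h : ∀ x, a • x ∈ N) : finrank R N = finrank R M := by
  have htors : IsTorsion R (M ⧸ N) := by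
    rintro ⟨x⟩
    exact ⟨⟨a, mem_nonZeroDivisors_of_ne_zero ha⟩, (Submodule.Quotient.mk_eq_zero N).2 (h x)⟩
  rw [← N.finrank_quotient_add_finrank, htors.finrank_eq_zero, zero_add]

theorem LinearMap.finrank_range_add_finrank_ker_of_finite {R : Type*} {M : Type u} {N : Type*}
    [Ring R] [StrongRankCondition R] [HasRankNullity.{u} R] [AddCommGroup M] [Module R M]
    [AddCommGroup N] [Module R N] [Module.Finite R M] (f : M →ₗ[R] N) :
    finrank R (range f) + finrank R (ker f) = finrank R M := by
  rw [← f.quotKerEquivRange.finrank_eq, (ker f).finrank_quotient_add_finrank]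

theorem LinearMap.finrank_ker_eq_sub_of_smul_mem_range {R M N : Type*} [CommRing R] [IsDomain R]
    [AddCommGroup M] [Module R M] [AddCommGroup N] [Module R N] [Module.Finite R M]
    [Module.Finite R N] (f : M →ₗ[R] N) {a : R} (ha : a ≠ 0) (h : ∀ y, a • y ∈ range f) :
    finrank R (ker f) = finrank R M - finrank R N := by
  rw [← f.finrank_range_add_finrank_ker_of_finite, (range f).finrank_eq_of_smul_mem ha h]
  omega

namespace NumberField.Units

variable (F : Type*) {E : Type*} [Field F] [Field E] [Algebra F E]

noncomputable def relNorm : (𝓞 E)ˣ →* (𝓞 F)ˣ := Units.map (RingOfIntegers.norm F)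

theorem relNorm_eq_one_iff (u : (𝓞 E)ˣ) : relNorm F u = 1 ↔ Algebra.norm F (u : E) = 1 := by
  rw [Units.ext_iff, RingOfIntegers.ext_iff]
  simp [relNorm]

theorem relNorm_map_algebraMap (u : (𝓞 F)ˣ) :
    relNorm F (Units.map (algebraMap (𝓞 F) (𝓞 E)).toMonoidHom u) = u ^ finrank F E :=
  Units.ext <|
    (RingOfIntegers.norm_algebraMap F (u : 𝓞 F)).trans (Units.val_pow_eq_pow_val u _).symm

theorem finrank_ker_relNorm [NumberField F] [NumberField E] :
    finrank ℤ (Additive (relNorm F (E := E)).ker) = rank E - rank F := by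
  let f := (relNorm F (E := E)).toAdditive.toIntLinearMap
  have hpow : ∀ y, (finrank F E : ℤ) • y ∈ LinearMap.range f := fun y =>
    ⟨Additive.ofMul (Units.map (algebraMap (𝓞 F) (𝓞 E)).toMonoidHom y.toMul), by
      show Additive.ofMul (relNorm F _) = _
      rw [toMul_ofMul, relNorm_map_algebraMap, ofMul_pow, natCast_zsmul, ofMul_toMul]⟩
  have hker : finrank ℤ (Additive (relNorm F (E := E)).ker) = finrank ℤ (LinearMap.ker f) := rfl
  rw [hker, f.finrank_ker_eq_sub_of_smul_mem_range (by exact_mod_cast finrank_pos.ne') hpow,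
    finrank_eq, finrank_eq]

end NumberField.Units

/-- the set `A = {x ∈ O_E : N_{E/F}(x) = 1}` of integral units of relative
norm 1 is a subgroup of the unit group `O_E^×`, of rank `rank O_E^× − rank O_F^×`. -/
theorem stmt16 (F E : Type*) [Field F] [Field E] [NumberField F] [NumberField E]
    [Algebra F E] :
    ∃ A : Subgroup (𝓞 E)ˣ,
      (∀ u : (𝓞 E)ˣ, u ∈ A ↔ Algebra.norm F ((u : 𝓞 E) : E) = 1) ∧
      Module.finrank ℤ (Additive ↥A) = Units.rank E - Units.rank F :=
  ⟨(Units.relNorm F).ker, fun u => (Units.relNorm F).mem_ker.trans (Units.relNorm_eq_one_iff F u),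
    Units.finrank_ker_relNorm F⟩
end
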